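/- arXiv:2603.28401 — 3 statements merged into one kernel-verified Lean document; each statement's English description precedes it below -/
import Mathlib

section
/- Let (X,d) be a compact metric space, ε > 0, F ⊆ X an ε-separated set of cardinality C, and μ the uniform (equidistributed) probability measure on F. Then for every Borel probability measure ν on X whose support has cardinality C_ν < C, the 1-Wasserstein distance satisfies W₁(μ, ν) ≥ ((C − C_ν + 1)/C) · (ε/2). -/
open MeasureTheory ENNReal

variable {X : Type*}

/-- The 1-Wasserstein distance, defined as the infimum over couplings of the
expected distance. -/
noncomputable def W1 [MetricSpace X] [MeasurableSpace X] (μ ν : Measure X) : ℝ :=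
  sInf {c | ∃ π : Measure (X × X), π.map Prod.fst = μ ∧ π.map Prod.snd = ν ∧
      c = ∫ p : X × X, dist p.1 p.2 ∂π}

/-- The uniform (equidistributed) probability measure on a finite set. -/
noncomputable def uniformOn [MeasurableSpace X] (F : Finset X) : Measure X :=
  ((F.card : ℝ≥0∞)⁻¹) • ∑ x ∈ F, Measure.dirac x

/-!
Let `π` be a coupling. For `y` in the support `s` of `ν` let `v y` be the mass `π` sends to `y`
and `r y` the part of it coming from points at distance `≥ ε/2`. A ball of radius `ε/2` meets `F`
in at most one point, so `v y ≤ r y + 1/C`. With `n y = min (d(y, F)) (ε/2)`, the function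
`n y + (ε - 2 n y) 𝟙[d(x, y) ≥ ε/2]` lies below `d(x, y)` for `x ∈ F` (a far point other than the
nearest one is at distance `≥ ε - d(y, F)` from `y`), so the cost of `π` is at least
`∑ n y v y + (ε - 2 n y) r y`. Each term is at least `ε/2 (e y + min (e y) (1/C))` with
`e y = (v y - 1/C)⁺`; the excesses `e y` add up to at least `1 - C_ν/C`, and the truncated
excesses to at least `1/C`, which is where the `+ 1` comes from.
-/

open Finset Metric

section Arithmetic

variable {ι : Type*}

lemma half_mul_excess_le {ε n v r c : ℝ} (hn0 : 0 ≤ n) (hn : n ≤ ε / 2) (hv : 0 ≤ v)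
    (hr : 0 ≤ r) (hvr : v ≤ r + c) :
    ε / 2 * (max (v - c) 0 + min (max (v - c) 0) c) ≤ n * v + (ε - 2 * n) * r := by
  set e := max (v - c) 0
  set m := min e c
  have her : e ≤ r := max_le (by linarith) hr
  have hme : m ≤ e := min_le_left _ _
  have hemv : e + m ≤ v := by
    rcases le_total (v - c) 0 with h | h
    · have he : e = 0 := max_eq_right h
      have : m ≤ 0 := he ▸ min_le_left e c
      linarith
    · have he : e = v - c := max_eq_left h
      have : m ≤ c := min_le_right _ _
      linarith
  linarith [mul_le_mul_of_nonneg_left hemv hn0,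
    mul_le_mul_of_nonneg_left her (by linarith : 0 ≤ ε - 2 * n),
    mul_nonneg (by linarith : 0 ≤ ε / 2 - n) (by linarith : 0 ≤ e - m)]

lemma le_sum_add_min {s : Finset ι} {e : ι → ℝ} {c : ℝ} (hc : 0 ≤ c) (he : ∀ i ∈ s, 0 ≤ e i)
    (hsum : 1 - #s * c ≤ ∑ i ∈ s, e i) (hcard : (#s + 1) * c ≤ 1) :
    1 - #s * c + c ≤ ∑ i ∈ s, (e i + min (e i) c) := by
  rw [sum_add_distrib]
  suffices c ≤ ∑ i ∈ s, min (e i) c by linarith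
  by_cases hbig : ∃ i ∈ s, c ≤ e i
  · obtain ⟨i, hi, hci⟩ := hbig
    calc c = min (e i) c := (min_eq_right hci).symm
      _ ≤ ∑ i ∈ s, min (e i) c :=
        single_le_sum (fun j hj => le_min (he j hj) hc) hi
  · push Not at hbig
    rw [sum_congr rfl fun i hi => min_eq_left (hbig i hi).le]
    linarith

lemma le_sum_transport_cost {s : Finset ι} {ε c : ℝ} {n v r : ι → ℝ} (hε : 0 ≤ ε) (hc : 0 ≤ c)
    (hcard : (#s + 1) * c ≤ 1) (hn0 : ∀ i ∈ s, 0 ≤ n i) (hn : ∀ i ∈ s, n i ≤ ε / 2)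
    (hv0 : ∀ i ∈ s, 0 ≤ v i) (hr0 : ∀ i ∈ s, 0 ≤ r i) (hvr : ∀ i ∈ s, v i ≤ r i + c)
    (hv : ∑ i ∈ s, v i = 1) :
    ε / 2 * (1 - (#s - 1) * c) ≤ ∑ i ∈ s, (n i * v i + (ε - 2 * n i) * r i) := by
  set e := fun i => max (v i - c) 0
  have hexcess : 1 - #s * c ≤ ∑ i ∈ s, e i := by
    have : ∑ i ∈ s, (v i - c) ≤ ∑ i ∈ s, e i := sum_le_sum fun i _ => le_max_left _ _
    simpa [sum_sub_distrib, hv] using this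
  calc ε / 2 * (1 - (#s - 1) * c) = ε / 2 * (1 - #s * c + c) := by ring
    _ ≤ ε / 2 * ∑ i ∈ s, (e i + min (e i) c) := by
      gcongr
      exact le_sum_add_min hc (fun i _ => le_max_right _ _) hexcess hcard
    _ = ∑ i ∈ s, ε / 2 * (e i + min (e i) c) := mul_sum _ _ _
    _ ≤ _ := sum_le_sum fun i hi =>
      half_mul_excess_le (hn0 i hi) (hn i hi) (hv0 i hi) (hr0 i hi) (hvr i hi)

end Arithmetic

section UniformOn

variable [MeasurableSpace X] (F : Finset X)

lemma uniformOn_apply {A : Set X} [DecidablePred (· ∈ A)] (hA : MeasurableSet A) :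
    uniformOn F A = #{x ∈ F | x ∈ A} / #F := by
  simp [uniformOn, Measure.dirac_apply' _ hA, Set.indicator_apply, sum_boole,
    ENNReal.div_eq_inv_mul]

lemma isProbabilityMeasure_uniformOn (hF : F.Nonempty) : IsProbabilityMeasure (uniformOn F) := by
  classical
  constructor
  rw [uniformOn_apply F MeasurableSet.univ, filter_true_of_mem fun _ _ => Set.mem_univ _]
  exact ENNReal.div_self (by simpa using hF.ne_empty) (natCast_ne_top _)

lemma ae_mem_uniformOn [MeasurableSingletonClass X] : ∀ᵐ x ∂uniformOn F, x ∈ F := by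
  classical
  refine ae_iff.2 ?_
  change uniformOn F (↑F)ᶜ = 0
  simp [uniformOn_apply F F.measurableSet.compl]

lemma measureReal_uniformOn_le {A : Set X} (hA : MeasurableSet A) (hAF : (A ∩ F).Subsingleton) :
    (uniformOn F).real A ≤ (#F : ℝ)⁻¹ := by
  classical
  have hcard : #{x ∈ F | x ∈ A} ≤ 1 :=
    card_le_one.2 fun a ha b hb => by
      simp only [mem_filter] at ha hb
      exact hAF ⟨ha.2, ha.1⟩ ⟨hb.2, hb.1⟩
  rw [measureReal_def, uniformOn_apply F hA, ENNReal.toReal_div, toReal_natCast, toReal_natCast,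
    ← one_div]
  gcongr
  exact_mod_cast hcard

end UniformOn

section Separated

variable [PseudoMetricSpace X] {ε : ℝ} {F : Finset X}

lemma ball_inter_subsingleton_of_separated (hsep : ∀ x ∈ F, ∀ y ∈ F, x ≠ y → ε ≤ dist x y)
    (y : X) : (ball y (ε / 2) ∩ F).Subsingleton := by
  rintro a ⟨ha, haF⟩ b ⟨hb, hbF⟩
  by_contra hab
  have := hsep a haF b hbF hab
  have := dist_triangle_right a b y
  rw [mem_ball] at ha hb
  linarith

lemma sub_infDist_le_dist_of_separated (hsep : ∀ x ∈ F, ∀ y ∈ F, x ≠ y → ε ≤ dist x y)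
    {x y : X} (hx : x ∈ F) (hxy : ε / 2 ≤ dist x y) : ε - infDist y F ≤ dist x y := by
  obtain ⟨x₀, hx₀, hd⟩ := F.finite_toSet.isCompact.exists_infDist_eq_dist ⟨x, hx⟩ y
  rw [hd]
  by_cases h : x = x₀
  · rw [← h, dist_comm]
    linarith
  · have := hsep x hx x₀ hx₀ h
    have := dist_triangle x y x₀
    linarith

lemma min_infDist_add_ite_le_dist (hsep : ∀ x ∈ F, ∀ y ∈ F, x ≠ y → ε ≤ dist x y) {x : X}
    (hx : x ∈ F) (y : X) :
    min (infDist y F) (ε / 2) +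
      (if ε / 2 ≤ dist x y then ε - 2 * min (infDist y F) (ε / 2) else 0) ≤ dist x y := by
  split_ifs with h
  · have := sub_infDist_le_dist_of_separated hsep hx h
    rcases min_choice (infDist y F) (ε / 2) with hmin | hmin <;> rw [hmin] <;> linarith
  · rw [add_zero, dist_comm]
    exact (min_le_left _ _).trans (infDist_le_dist_of_mem hx)

end Separated

section Fibers

variable {α β : Type*}

lemma sum_indicator_fiber_of_mem {M : Type*} [AddCommMonoid M] {s : Finset β}
    (g : β → α × β → M) {p : α × β} (hp : p.2 ∈ s) :
    ∑ y ∈ s, (Prod.snd ⁻¹' {y}).indicator (g y) p = g p.2 p := by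
  refine (sum_eq_single_of_mem p.2 hp fun y _ hy => ?_).trans
    (Set.indicator_of_mem (Set.mem_preimage.2 rfl) _)
  exact Set.indicator_of_notMem (fun h => hy h.symm) _

variable [MeasurableSpace α] [MeasurableSpace β] [MeasurableSingletonClass β]
  {π : Measure (α × β)} [IsFiniteMeasure π]

lemma integral_sum_indicator_fiber (s : Finset β) {D : Set (α × β)} (hD : MeasurableSet D)
    (n k : β → ℝ) :
    ∫ p, ∑ y ∈ s, (Prod.snd ⁻¹' {y}).indicator (fun q => n y + D.indicator (fun _ => k y) q) p ∂π
      = ∑ y ∈ s, (n y * π.real (Prod.snd ⁻¹' {y}) + k y * π.real (Prod.snd ⁻¹' {y} ∩ D)) := by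
  have hfib (y : β) : MeasurableSet (Prod.snd ⁻¹' {y} : Set (α × β)) :=
    measurable_snd (measurableSet_singleton y)
  rw [integral_finsetSum _ fun y _ =>
    ((integrable_const _).add ((integrable_const _).indicator hD)).indicator (hfib y)]
  refine sum_congr rfl fun y _ => ?_
  rw [integral_indicator (hfib y), integral_add (integrable_const _)
    ((integrable_const _).indicator hD), setIntegral_const, setIntegral_indicator hD,
    setIntegral_const, smul_eq_mul, smul_eq_mul, mul_comm, mul_comm (π.real _)]

lemma sum_measureReal_fiber_eq_one {ν : Measure β} [IsProbabilityMeasure ν]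
    (hπ : π.map Prod.snd = ν) {s : Finset β} (hνs : ν (↑s)ᶜ = 0) :
    ∑ y ∈ s, π.real (Prod.snd ⁻¹' {y}) = 1 := by
  rw [sum_measureReal_preimage_singleton s fun y _ => measurable_snd (measurableSet_singleton y),
    ← map_measureReal_apply measurable_snd s.measurableSet, hπ, measureReal_def,
    (prob_compl_eq_zero_iff s.measurableSet).1 hνs, toReal_one]

end Fibers

section Coupling

variable [MetricSpace X] [MeasurableSpace X] {ε : ℝ} {F s : Finset X} {π : Measure (X × X)}

lemma le_W1 {μ ν : Measure X} [IsProbabilityMeasure μ] [IsProbabilityMeasure ν] {c : ℝ}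
    (h : ∀ π : Measure (X × X), π.map Prod.fst = μ → π.map Prod.snd = ν →
      c ≤ ∫ p, dist p.1 p.2 ∂π) :
    c ≤ W1 μ ν :=
  le_csInf ⟨_, μ.prod ν, by simp, by simp, rfl⟩ fun _ ⟨π, hπ₁, hπ₂, hc⟩ => hc ▸ h π hπ₁ hπ₂

lemma measureReal_fiber_le_far_add_inv_card [OpensMeasurableSpace X] [IsFiniteMeasure π]
    (hsep : ∀ x ∈ F, ∀ y ∈ F, x ≠ y → ε ≤ dist x y) (hπ : π.map Prod.fst = uniformOn F) (y : X) :
    π.real (Prod.snd ⁻¹' {y}) ≤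
      π.real (Prod.snd ⁻¹' {y} ∩ {p | ε / 2 ≤ dist p.1 p.2}) + (#F : ℝ)⁻¹ := by
  have hnear : π.real (Prod.fst ⁻¹' ball y (ε / 2)) ≤ (#F : ℝ)⁻¹ := by
    rw [← map_measureReal_apply measurable_fst measurableSet_ball, hπ]
    exact measureReal_uniformOn_le F measurableSet_ball
      (ball_inter_subsingleton_of_separated hsep y)
  calc π.real (Prod.snd ⁻¹' {y})
      ≤ π.real (Prod.snd ⁻¹' {y} ∩ {p | ε / 2 ≤ dist p.1 p.2} ∪ Prod.fst ⁻¹' ball y (ε / 2)) := by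
        refine measureReal_mono fun p (hp : p.2 = y) => ?_
        by_cases h : ε / 2 ≤ dist p.1 p.2
        · exact Or.inl ⟨hp, h⟩
        · exact Or.inr (show dist p.1 y < ε / 2 from hp ▸ not_le.1 h)
    _ ≤ _ := (measureReal_union_le _ _).trans (by linarith)

lemma le_integral_dist_of_coupling [CompactSpace X] [BorelSpace X] (hε : 0 ≤ ε)
    (hsep : ∀ x ∈ F, ∀ y ∈ F, x ≠ y → ε ≤ dist x y) (hcard : #s < #F)
    {ν : Measure X} [IsProbabilityMeasure ν] (hνs : ν (↑s)ᶜ = 0) [IsFiniteMeasure π]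
    (hπ₁ : π.map Prod.fst = uniformOn F) (hπ₂ : π.map Prod.snd = ν) :
    ((#F - #s + 1 : ℝ) / #F) * (ε / 2) ≤ ∫ p, dist p.1 p.2 ∂π := by
  set n : X → ℝ := fun y => min (infDist y F) (ε / 2)
  set D : Set (X × X) := {p | ε / 2 ≤ dist p.1 p.2}
  set u : X × X → ℝ := fun p =>
    ∑ y ∈ s, (Prod.snd ⁻¹' {y}).indicator (fun q => n y + D.indicator (fun _ => ε - 2 * n y) q) p
  have hD : MeasurableSet D := (isClosed_le continuous_const continuous_dist).measurableSet
  have hF : (0 : ℝ) < #F := by exact_mod_cast (Nat.zero_le _).trans_lt hcard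
  have hsupp : ∀ᵐ p ∂π, p.1 ∈ F ∧ p.2 ∈ s :=
    (ae_of_ae_map measurable_fst.aemeasurable (hπ₁ ▸ ae_mem_uniformOn F)).and
      (ae_of_ae_map measurable_snd.aemeasurable (hπ₂ ▸ ae_iff.2 hνs))
  have hu : ∀ᵐ p ∂π, u p ≤ dist p.1 p.2 := by
    filter_upwards [hsupp] with p ⟨hp₁, hp₂⟩
    dsimp only [u]
    rw [sum_indicator_fiber_of_mem _ hp₂, Set.indicator_apply]
    exact min_infDist_add_ite_le_dist hsep hp₁ p.2
  have hu_int : Integrable u π := integrable_finsetSum _ fun y _ =>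
    ((integrable_const _).add ((integrable_const _).indicator hD)).indicator
      (measurable_snd (measurableSet_singleton y))
  have hdist_int : Integrable (fun p : X × X => dist p.1 p.2) π :=
    continuous_dist.integrable_of_hasCompactSupport (HasCompactSupport.of_compactSpace _)
  calc ((#F - #s + 1 : ℝ) / #F) * (ε / 2) = ε / 2 * (1 - (#s - 1) * (#F : ℝ)⁻¹) := by
        field_simp
        ring
    _ ≤ ∑ y ∈ s, (n y * π.real (Prod.snd ⁻¹' {y}) +
          (ε - 2 * n y) * π.real (Prod.snd ⁻¹' {y} ∩ D)) :=
      le_sum_transport_cost hε (by positivity)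
        (by rw [← div_eq_mul_inv, div_le_one hF]; exact_mod_cast hcard)
        (fun _ _ => le_min infDist_nonneg (by positivity)) (fun _ _ => min_le_right _ _)
        (fun _ _ => measureReal_nonneg) (fun _ _ => measureReal_nonneg)
        (fun y _ => measureReal_fiber_le_far_add_inv_card hsep hπ₁ y)
        (sum_measureReal_fiber_eq_one hπ₂ hνs)
    _ = ∫ p, u p ∂π := (integral_sum_indicator_fiber s hD n _).symm
    _ ≤ ∫ p, dist p.1 p.2 ∂π := integral_mono_ae hu_int hdist_int hu

end Coupling

/-- Lower bound for the Wasserstein distance between the uniform measure on an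
`ε`-separated set of cardinality `C` and any measure supported on `C_ν < C` points. -/
theorem W1_ge_of_separated [MetricSpace X] [CompactSpace X]
    [MeasurableSpace X] [BorelSpace X]
    (ε : ℝ) (hε : 0 < ε) (F : Finset X)
    (hsep : ∀ x ∈ F, ∀ y ∈ F, x ≠ y → ε ≤ dist x y)
    (ν : Measure X) [IsProbabilityMeasure ν]
    (s : Finset X) (hνs : ν (↑s : Set X)ᶜ = 0) (hcard : s.card < F.card) :
    ((F.card - s.card + 1 : ℝ) / F.card) * (ε / 2) ≤ W1 (uniformOn F) ν := by
  have := isProbabilityMeasure_uniformOn F (card_pos.1 ((Nat.zero_le _).trans_lt hcard))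
  refine le_W1 fun π hπ₁ hπ₂ => ?_
  have : IsProbabilityMeasure (π.map Prod.snd) := hπ₂ ▸ ‹IsProbabilityMeasure ν›
  have := Measure.isProbabilityMeasure_of_map (μ := π) Prod.snd
  exact le_integral_dist_of_coupling hε.le hsep hcard hνs hπ₁ hπ₂
end

section
/- Let (X,d) be a compact metric space, D a metric on 𝒫(X), and ν, η Borel probability measures with ν ≥ tη for some t > 0 (i.e., ν − tη is a nonnegative measure). If D is a Wasserstein metric W_p (1 ≤ p < ∞), then for every ε > 0, Q_{ν,D}(tε) ≥ Q_{η,D}(ε), where Q_{μ,D}(ε) is the least N such that some probability measure supported on at most N points is within D-distance ε of μ. (It suffices to prove this for p = 1.) -/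
open MeasureTheory ENNReal

variable {X : Type*}

/-- The `W₁`-quantization number of `μ` at scale `ε`: the least `N` such that some
probability measure supported on a set of `N` points is within `W₁`-distance `< ε` of `μ`. -/
noncomputable def Qnum [MetricSpace X] [MeasurableSpace X] (μ : Measure X) (ε : ℝ) : ℕ :=
  sInf {N | ∃ ν : Measure X, IsProbabilityMeasure ν ∧
      (∃ s : Finset X, s.card = N ∧ ν (↑s : Set X)ᶜ = 0) ∧ W1 μ ν < ε}

section Near

variable [MetricSpace X]

/-- Nearest point among `x₀ :: l`. -/
noncomputable def nearL (x₀ : X) : List X → X → X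
  | [] => fun _ => x₀
  | a :: l => fun x => if dist x a ≤ dist x (nearL x₀ l x) then a else nearL x₀ l x

lemma nearL_mem (x₀ : X) (l : List X) (x : X) : nearL x₀ l x ∈ x₀ :: l := by
  induction l with
  | nil => simp [nearL]
  | cons a l ih =>
    simp only [nearL]
    split
    · simp
    · rcases List.mem_cons.mp ih with h | h
      · simp [h]
      · simp [h]

lemma nearL_min (x₀ : X) (l : List X) (x : X) :
    ∀ a ∈ x₀ :: l, dist x (nearL x₀ l x) ≤ dist x a := by
  induction l with
  | nil => intro a ha; simp at ha; simp [nearL, ha]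
  | cons b l ih =>
    intro a ha
    show dist x (if dist x b ≤ dist x (nearL x₀ l x) then b else nearL x₀ l x) ≤ dist x a
    have hmem : a = b ∨ a ∈ x₀ :: l := by
      rcases List.mem_cons.mp ha with h | h
      · exact Or.inr (by simp [h])
      · rcases List.mem_cons.mp h with h' | h'
        · exact Or.inl h'
        · exact Or.inr (by simp [h'])
    split_ifs with hb
    · rcases hmem with rfl | h
      · exact le_rfl
      · exact hb.trans (ih a h)
    · rcases hmem with rfl | h
      · exact (not_le.mp hb).le
      · exact ih a h

lemma nearL_measurable [MeasurableSpace X] [BorelSpace X] [CompactSpace X]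
    (x₀ : X) (l : List X) : Measurable (nearL x₀ l) := by
  induction l with
  | nil => exact measurable_const
  | cons a l ih =>
    have : (nearL x₀ (a :: l)) =
        fun x => if dist x a ≤ dist x (nearL x₀ l x) then a else nearL x₀ l x := rfl
    rw [this]
    have h1 : Measurable fun x => dist x a := (continuous_id.dist continuous_const).measurable
    have h2 : Measurable fun x => dist x (nearL x₀ l x) := measurable_id.dist ih
    exact Measurable.ite (measurableSet_le h1 h2) measurable_const ih

end Near

section W1lemmas

variable [MetricSpace X] [CompactSpace X] [MeasurableSpace X] [BorelSpace X]

lemma dist_le_diam (x y : X) : dist x y ≤ Metric.diam (Set.univ : Set X) :=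
  Metric.dist_le_diam_of_mem isCompact_univ.isBounded (Set.mem_univ x) (Set.mem_univ y)

lemma W1_bddBelow (μ ν' : Measure X) :
    BddBelow {c | ∃ π : Measure (X × X), π.map Prod.fst = μ ∧ π.map Prod.snd = ν' ∧
      c = ∫ p : X × X, dist p.1 p.2 ∂π} := by
  refine ⟨0, ?_⟩
  rintro c ⟨π, -, -, rfl⟩
  exact integral_nonneg fun p => dist_nonneg

/-- Integrability of a bounded measurable function against a probability measure. -/
lemma integrable_dist_coupling (π : Measure (X × X)) [IsFiniteMeasure π] :
    Integrable (fun p : X × X => dist p.1 p.2) π := by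
  refine Integrable.mono' (integrable_const (Metric.diam (Set.univ : Set X)))
    (continuous_dist.aestronglyMeasurable) ?_
  filter_upwards with p
  rw [Real.norm_eq_abs, abs_of_nonneg dist_nonneg]
  exact dist_le_diam _ _

lemma integrable_dist_near (μ : Measure X) [IsFiniteMeasure μ] {f : X → X}
    (hf : Measurable f) : Integrable (fun x => dist x (f x)) μ := by
  refine Integrable.mono' (integrable_const (Metric.diam (Set.univ : Set X)))
    (measurable_id.dist hf).aestronglyMeasurable ?_
  filter_upwards with x
  rw [Real.norm_eq_abs, abs_of_nonneg dist_nonneg]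
  exact dist_le_diam _ _

lemma W1_map_le (μ : Measure X) [IsProbabilityMeasure μ] {f : X → X} (hf : Measurable f) :
    W1 μ (μ.map f) ≤ ∫ x, dist x (f x) ∂μ := by
  apply csInf_le (W1_bddBelow _ _)
  have hm : Measurable (fun x : X => (x, f x)) := measurable_id.prodMk hf
  refine ⟨μ.map (fun x => (x, f x)), ?_, ?_, ?_⟩
  · rw [Measure.map_map measurable_fst hm]
    exact Measure.map_id
  · rw [Measure.map_map measurable_snd hm]
    rfl
  · rw [integral_map hm.aemeasurable continuous_dist.aestronglyMeasurable]

end W1lemmas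

/-- If `ν ≥ t·η` with `t > 0`, then `Q_{ν,W₁}(tε) ≥ Q_{η,W₁}(ε)`. -/
theorem Qnum_le_of_le [MetricSpace X] [CompactSpace X]
    [MeasurableSpace X] [BorelSpace X]
    (ν η : Measure X) [IsProbabilityMeasure ν] [IsProbabilityMeasure η]
    (t : ℝ) (ht : 0 < t) (hle : (ENNReal.ofReal t) • η ≤ ν)
    (ε : ℝ) (hε : 0 < ε) :
    Qnum η ε ≤ Qnum ν (t * ε) := by
  classical
  have hX : Nonempty X := by
    by_contra h
    have : (Set.univ : Set X) = ∅ := by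
      simp [Set.eq_empty_iff_forall_notMem]
      intro x; exact h ⟨x⟩
    have h1 : ν Set.univ = 1 := measure_univ
    rw [this] at h1
    simp at h1
  obtain ⟨x₀⟩ := hX
  -- Step 1: the defining set for `Qnum ν (t*ε)` is nonempty.
  have hnet : ∃ s : Finset X, x₀ ∈ s ∧ ∀ x : X, ∃ y ∈ s, dist x y < t * ε / 2 := by
    obtain ⟨u, hu_fin, hu_cov⟩ := (Metric.totallyBounded_iff.mp (isCompact_univ : IsCompact (Set.univ : Set X)).totallyBounded)
      (t * ε / 2) (by positivity)
    refine ⟨insert x₀ hu_fin.toFinset, Finset.mem_insert_self _ _, fun x => ?_⟩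
    obtain ⟨y, hy, hxy⟩ := Set.mem_iUnion₂.mp (hu_cov (Set.mem_univ x))
    exact ⟨y, Finset.mem_insert_of_mem (hu_fin.mem_toFinset.mpr hy), hxy⟩
  obtain ⟨s₀, hx₀s₀, hs₀⟩ := hnet
  set Sν := {N | ∃ μ' : Measure X, IsProbabilityMeasure μ' ∧
      (∃ s : Finset X, s.card = N ∧ μ' (↑s : Set X)ᶜ = 0) ∧ W1 ν μ' < t * ε} with hSν
  have hSν_ne : Sν.Nonempty := by
    set f := nearL x₀ s₀.toList with hf
    have hfm : Measurable f := nearL_measurable x₀ s₀.toList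
    have hfs : ∀ x, f x ∈ s₀ := by
      intro x
      rcases List.mem_cons.mp (nearL_mem x₀ s₀.toList x) with h | h
      · rw [show f x = x₀ from h]; exact hx₀s₀
      · exact Finset.mem_toList.mp h
    refine ⟨s₀.card, ν.map f, Measure.isProbabilityMeasure_map hfm.aemeasurable,
      ⟨s₀, rfl, ?_⟩, ?_⟩
    · rw [Measure.map_apply hfm s₀.finite_toSet.isClosed.measurableSet.compl]
      have : f ⁻¹' (↑s₀ : Set X)ᶜ = ∅ := by
        ext x; simp [hfs x]
      simp [this]
    · refine lt_of_le_of_lt (W1_map_le ν hfm) ?_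
      have hbd : ∀ x, dist x (f x) ≤ t * ε / 2 := by
        intro x
        obtain ⟨y, hy, hxy⟩ := hs₀ x
        refine le_trans (nearL_min x₀ s₀.toList x y ?_) hxy.le
        exact List.mem_cons_of_mem _ (Finset.mem_toList.mpr hy)
      calc ∫ x, dist x (f x) ∂ν ≤ ∫ _x, t * ε / 2 ∂ν :=
            integral_mono (integrable_dist_near ν hfm) (integrable_const _) hbd
        _ = t * ε / 2 := by simp
        _ < t * ε := by linarith [mul_pos ht hε]
  -- Step 2: extract a minimizer for ν.
  obtain ⟨μ', hμ'p, ⟨s, hscard, hssupp⟩, hW⟩ := Nat.sInf_mem hSν_ne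
  haveI := hμ'p
  -- s is nonempty
  have hs_ne : ∃ z, z ∈ s := by
    by_contra h
    push_neg at h
    have : (↑s : Set X) = ∅ := by
      simp [Set.eq_empty_iff_forall_notMem]; exact h
    rw [this] at hssupp
    simp at hssupp
  obtain ⟨z, hz⟩ := hs_ne
  set f := nearL z s.toList with hfdef
  have hfm : Measurable f := nearL_measurable z s.toList
  have hfs : ∀ x, f x ∈ s := by
    intro x
    rcases List.mem_cons.mp (nearL_mem z s.toList x) with h | h
    · rw [show f x = z from h]; exact hz
    · exact Finset.mem_toList.mp h
  set g := fun x => dist x (f x) with hgdef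
  -- coupling with small cost
  have hWset_ne : {c | ∃ π : Measure (X × X), π.map Prod.fst = ν ∧ π.map Prod.snd = μ' ∧
      c = ∫ p : X × X, dist p.1 p.2 ∂π}.Nonempty := by
    refine ⟨∫ p : X × X, dist p.1 p.2 ∂(ν.prod μ'), ν.prod μ', ?_, ?_, rfl⟩
    · rw [Measure.map_fst_prod]; simp
    · rw [Measure.map_snd_prod]; simp
  obtain ⟨c, ⟨π, hπ1, hπ2, rfl⟩, hclt⟩ := exists_lt_of_csInf_lt hWset_ne hW
  haveI : IsProbabilityMeasure π := by
    constructor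
    have : π.map Prod.fst Set.univ = π Set.univ := by
      rw [Measure.map_apply measurable_fst MeasurableSet.univ]; rfl
    rw [← this, hπ1, measure_univ]
  -- key: ∫ g dν ≤ ∫ dist dπ
  have hkey : ∫ x, g x ∂ν ≤ ∫ p : X × X, dist p.1 p.2 ∂π := by
    have hgm : Measurable g := measurable_id.dist hfm
    have h1 : ∫ x, g x ∂ν = ∫ p : X × X, g p.1 ∂π := by
      rw [← hπ1, integral_map measurable_fst.aemeasurable hgm.aestronglyMeasurable]
    have hg1_int : Integrable (fun p : X × X => g p.1) π := by
      refine Integrable.mono' (integrable_const (Metric.diam (Set.univ : Set X)))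
        (hgm.comp measurable_fst).aestronglyMeasurable ?_
      filter_upwards with p
      rw [Real.norm_eq_abs, abs_of_nonneg dist_nonneg]
      exact dist_le_diam _ _
    rw [h1]
    apply integral_mono_ae hg1_int (integrable_dist_coupling π)
    have hsnd : π (Prod.snd ⁻¹' (↑s : Set X)ᶜ) = 0 := by
        rw [← Measure.map_apply measurable_snd s.finite_toSet.isClosed.measurableSet.compl, hπ2]
        exact hssupp
    filter_upwards [measure_eq_zero_iff_ae_notMem.mp hsnd] with p hp
    have hp2 : p.2 ∈ (↑s : Set X) := not_not.mp hp
    refine nearL_min z s.toList p.1 p.2 ?_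
    exact List.mem_cons_of_mem _ (Finset.mem_toList.mpr hp2)
  -- transfer to η
  have hgν_int : Integrable g ν := integrable_dist_near ν hfm
  have hgη : t * ∫ x, g x ∂η ≤ ∫ x, g x ∂ν := by
    have := integral_mono_measure hle (Filter.Eventually.of_forall fun x => dist_nonneg) hgν_int
    rwa [integral_smul_measure, ENNReal.toReal_ofReal ht.le, smul_eq_mul] at this
  have hgη_lt : ∫ x, g x ∂η < ε := by
    have h1 : t * ∫ x, g x ∂η < t * ε := lt_of_le_of_lt hgη (lt_of_le_of_lt hkey hclt)
    exact lt_of_mul_lt_mul_left h1 ht.le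
  -- conclude
  apply Nat.sInf_le
  refine ⟨η.map f, Measure.isProbabilityMeasure_map hfm.aemeasurable, ⟨s, hscard, ?_⟩, ?_⟩
  · rw [Measure.map_apply hfm s.finite_toSet.isClosed.measurableSet.compl]
    have : f ⁻¹' (↑s : Set X)ᶜ = ∅ := by
      ext x; simp [hfs x]
    simp [this]
  · exact lt_of_le_of_lt (W1_map_le η hfm) hgη_lt
end

section
/- Let (X,d) be a compact metric space with finite upper box-counting dimension and f: X → X a continuous map. Then the upper dynamical metric order of f vanishes: limsup_{ε→0⁺} (log⁺(limsup_{n→∞} (1/n) log S(X,n,ε)))/|log ε| = 0, where S(X,n,ε) is the maximal cardinality of (n,ε)-separated sets for f. -/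
open Filter

variable {X : Type*}

/-- The Bowen dynamical metric: `bowen ρ f n x y = max_{0 ≤ j < n} ρ (f^[j] x) (f^[j] y)`. -/
noncomputable def bowen (ρ : X → X → ℝ) (f : X → X) : ℕ → X → X → ℝ
  | 0 => fun _ _ => 0
  | n + 1 => fun x y => max (bowen ρ f n x y) (ρ (f^[n] x) (f^[n] y))

/-- A finite set `E` is `ε`-separated for `ρ`. -/
def IsSep (ρ : X → X → ℝ) (ε : ℝ) (E : Finset X) : Prop :=
  ∀ x ∈ E, ∀ y ∈ E, x ≠ y → ε < ρ x y

/-- Maximal cardinality of an `ε`-separated set. -/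
noncomputable def Scard (ρ : X → X → ℝ) (ε : ℝ) : ℕ :=
  sSup {n | ∃ E : Finset X, IsSep ρ ε E ∧ E.card = n}

/-- `log⁺` on extended reals: `log⁺ t = max {0, log t}`, with `log⁺ 0 = 0` and
`log⁺ (+∞) = +∞`. -/
noncomputable def elogPlus (x : EReal) : EReal :=
  if x = ⊤ then ⊤ else ((max 0 (Real.log x.toReal) : ℝ) : EReal)

/-!
Every (n,ε)-separated set is coded injectively by its itineraries through an ε/2-net of X,
so S(X,n,ε) ≤ S(X,ε/2)ⁿ and the ε-entropy is at most log S(X,ε/2). Finite box dimension makes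
log S(X,ε/2) = O(|log ε|), so log⁺ of the ε-entropy is O(log |log ε|) = o(|log ε|).
-/

open Topology Real

noncomputable def sepEntropy (ρ : X → X → ℝ) (f : X → X) (ε : ℝ) : EReal :=
  limsup (fun n : ℕ => (((n : ℝ)⁻¹ * log (Scard (bowen ρ f n) ε) : ℝ) : EReal)) atTop

section Separated

variable {ρ : X → X → ℝ} {ε : ℝ}

lemma bowen_le_of_forall {f : X → X} {n : ℕ} {x y : X} (hε : 0 ≤ ε)
    (h : ∀ j < n, ρ (f^[j] x) (f^[j] y) ≤ ε) : bowen ρ f n x y ≤ ε := by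
  induction n with
  | zero => exact hε
  | succ n ih => exact max_le (ih fun j hj => h j (hj.trans n.lt_succ_self)) (h n n.lt_succ_self)

lemma IsSep.card_le {ι : Type*} [Fintype ι] {E : Finset X} (hE : IsSep ρ ε E) (code : X → ι)
    (hcode : ∀ x y, code x = code y → ρ x y ≤ ε) : E.card ≤ Fintype.card ι := by
  classical
  refine (Finset.card_le_card_of_injOn code (fun _ _ => Finset.mem_univ _) ?_).trans_eq
    Finset.card_univ
  intro x hx y hy hxy
  by_contra hne
  exact (hE x hx y hy hne).not_ge (hcode x y hxy)

lemma scard_le {N : ℕ} (h : ∀ E, IsSep ρ ε E → E.card ≤ N) : Scard ρ ε ≤ N :=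
  csSup_le' (by rintro _ ⟨E, hE, rfl⟩; exact h E hE)

end Separated

section Compact

variable [PseudoMetricSpace X] [CompactSpace X]

lemma exists_finset_nearest {δ : ℝ} (hδ : 0 < δ) :
    ∃ (t : Finset X) (p : X → t), ∀ x : X, dist x (p x) < δ := by
  obtain ⟨t, -, ht, hcover⟩ := finite_cover_balls_of_compact (isCompact_univ (X := X)) hδ
  have hnear : ∀ x : X, ∃ c : ht.toFinset, dist x c < δ := fun x => by
    obtain ⟨c, hc, hxc⟩ := Set.mem_iUnion₂.mp (hcover (Set.mem_univ x))
    exact ⟨⟨c, ht.mem_toFinset.mpr hc⟩, hxc⟩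
  choose p hp using hnear
  exact ⟨ht.toFinset, p, hp⟩

lemma bddAbove_card_isSep {ε : ℝ} (hε : 0 < ε) :
    BddAbove {n | ∃ E : Finset X, IsSep dist ε E ∧ E.card = n} := by
  obtain ⟨t, p, hp⟩ := exists_finset_nearest (X := X) (half_pos hε)
  refine ⟨t.card, ?_⟩
  rintro _ ⟨E, hE, rfl⟩
  refine (hE.card_le p fun x y hxy => ?_).trans_eq (Fintype.card_coe t)
  have hy := hp y
  rw [← hxy] at hy
  linarith [hp x, dist_triangle_right x y (p x)]

/-- A separated set of maximal cardinality cannot be enlarged, hence it is a `δ`-net. -/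
lemma exists_net_card_eq_scard {δ : ℝ} (hδ : 0 < δ) :
    ∃ E : Finset X, E.card = Scard (dist : X → X → ℝ) δ ∧ ∀ x, ∃ c ∈ E, dist x c ≤ δ := by
  classical
  have hne : {n | ∃ E : Finset X, IsSep dist δ E ∧ E.card = n}.Nonempty :=
    ⟨0, ∅, by simp [IsSep], rfl⟩
  obtain ⟨E, hE, hcard⟩ := Nat.sSup_mem hne (bddAbove_card_isSep hδ)
  refine ⟨E, hcard, fun x => ?_⟩
  by_contra! hfar
  have hx : x ∉ E := fun hx => (hfar x hx).not_ge ((dist_self x).le.trans hδ.le)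
  have hsep : IsSep dist δ (insert x E) := by
    intro a ha b hb hab
    rcases Finset.mem_insert.mp ha with rfl | ha' <;> rcases Finset.mem_insert.mp hb with rfl | hb'
    · exact absurd rfl hab
    · exact hfar b hb'
    · exact dist_comm b a ▸ hfar a ha'
    · exact hE a ha' b hb' hab
  have := le_csSup (bddAbove_card_isSep hδ) ⟨insert x E, hsep, rfl⟩
  rw [Finset.card_insert_of_notMem hx, hcard] at this
  omega

lemma scard_bowen_le_pow (f : X → X) {ε : ℝ} (hε : 0 < ε) (n : ℕ) :
    Scard (bowen dist f n) ε ≤ Scard (dist : X → X → ℝ) (ε / 2) ^ n := by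
  obtain ⟨E₀, hcard, hnet⟩ := exists_net_card_eq_scard (X := X) (half_pos hε)
  choose p hp using hnet
  let itinerary : X → Fin n → E₀ := fun x j => ⟨p (f^[j] x), (hp _).1⟩
  refine scard_le fun E hE => ?_
  refine (hE.card_le itinerary fun x y hxy => bowen_le_of_forall hε.le fun j hj => ?_).trans_eq ?_
  · have hj : p (f^[j] x) = p (f^[j] y) := congrArg Subtype.val (congrFun hxy ⟨j, hj⟩)
    have hx := (hp (f^[j] x)).2
    rw [hj] at hx
    linarith [(hp (f^[j] y)).2, dist_triangle_right (f^[j] x) (f^[j] y) (p (f^[j] y))]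
  · simp [hcard]

end Compact

lemma sepEntropy_nonneg (ρ : X → X → ℝ) (f : X → X) (ε : ℝ) : 0 ≤ sepEntropy ρ f ε :=
  le_limsup_of_frequently_le (Frequently.of_forall fun n =>
    EReal.coe_nonneg.mpr (mul_nonneg (by positivity) (log_natCast_nonneg _)))

lemma sepEntropy_le_log_of_scard_le_pow {ρ : X → X → ℝ} {f : X → X} {ε : ℝ} {M : ℕ}
    (h : ∀ n, Scard (bowen ρ f n) ε ≤ M ^ n) : sepEntropy ρ f ε ≤ (log M : ℝ) := by
  refine limsup_le_of_le (by isBoundedDefault) (Eventually.of_forall fun n => ?_)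
  rw [EReal.coe_le_coe_iff]
  rcases n.eq_zero_or_pos with rfl | hn
  · simpa using log_natCast_nonneg M
  rw [inv_mul_le_iff₀ (by exact_mod_cast hn), ← log_pow]
  rcases (Scard (bowen ρ f n) ε).eq_zero_or_pos with h0 | h0
  · simpa [h0] using log_natCast_nonneg (M ^ n)
  · exact log_le_log (by exact_mod_cast h0) (by exact_mod_cast h n)

lemma elogPlus_nonneg (x : EReal) : 0 ≤ elogPlus x := by
  unfold elogPlus
  split_ifs <;> simp

lemma elogPlus_le_log {x : EReal} {a : ℝ} (hx : 0 ≤ x) (hxa : x ≤ a) (ha : 1 ≤ a) :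
    elogPlus x ≤ log a := by
  have hx_top : x ≠ ⊤ := ne_top_of_le_ne_top (EReal.coe_ne_top a) hxa
  rw [elogPlus, if_neg hx_top, EReal.coe_le_coe_iff]
  have hxa' : x.toReal ≤ a := by
    simpa using EReal.toReal_le_toReal hxa (ne_bot_of_le_ne_bot (by simp) hx) (EReal.coe_ne_top a)
  refine max_le (log_nonneg ha) ?_
  rcases (EReal.toReal_nonneg hx).eq_or_lt with h0 | h0
  · simpa [← h0] using log_nonneg ha
  · exact log_le_log h0 hxa'

lemma tendsto_log_const_mul_div_atTop {K : ℝ} (hK : 0 < K) :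
    Tendsto (fun t => log (K * t) / t) atTop (𝓝 0) := by
  refine ((tendsto_pow_log_div_mul_add_atTop K⁻¹ 0 1 (inv_ne_zero hK.ne')).comp
    (tendsto_id.const_mul_atTop hK)).congr fun t => ?_
  simp [inv_mul_cancel_left₀ hK.ne']

lemma EReal.limsup_eq_zero_of_nonneg_of_le {α : Type*} {l : Filter α} [l.NeBot] {F : α → EReal}
    {g : α → ℝ} (hF : ∀ a, 0 ≤ F a) (hFg : ∀ᶠ a in l, F a ≤ g a) (hg : Tendsto g l (𝓝 0)) :
    limsup F l = 0 := by
  refine le_antisymm ?_ (le_limsup_of_frequently_le (Frequently.of_forall hF))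
  calc limsup F l ≤ limsup (fun a => (g a : EReal)) l := limsup_le_limsup hFg
    _ = 0 := (EReal.tendsto_coe.mpr hg).limsup_eq

lemma tendsto_abs_log_nhdsGT_zero : Tendsto (fun ε => |log ε|) (𝓝[>] 0) atTop :=
  tendsto_abs_atBot_atTop.comp tendsto_log_nhdsGT_zero

lemma exists_eventually_le_mul_abs_log_half {g : ℝ → ℝ}
    (hg : limsup (fun ε => ((g ε / |log ε| : ℝ) : EReal)) (𝓝[>] 0) < ⊤) :
    ∃ K, 1 ≤ K ∧ ∀ᶠ ε in 𝓝[>] 0, g (ε / 2) ≤ K * |log ε| := by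
  obtain ⟨c, hc, -⟩ := EReal.exists_between_coe_real hg
  have hlarge := tendsto_abs_log_nhdsGT_zero.eventually_ge_atTop 1
  have hbound : ∀ᶠ ε in 𝓝[>] (0 : ℝ), g ε ≤ max c 1 * |log ε| := by
    filter_upwards [eventually_lt_of_limsup_lt hc, hlarge] with ε hε hε1
    rw [← div_le_iff₀ (by linarith)]
    exact (EReal.coe_lt_coe_iff.mp hε).le.trans (le_max_left c 1)
  refine ⟨2 * max c 1, by linarith [le_max_right c 1], ?_⟩
  filter_upwards [eventually_nhdsGT_zero_mul_left (inv_pos.mpr two_pos) hbound,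
    self_mem_nhdsWithin, hlarge] with ε hε (hε0 : 0 < ε) hε1
  rw [inv_mul_eq_div] at hε
  have hlog_half : |log (ε / 2)| ≤ 2 * |log ε| := by
    rw [log_div hε0.ne' two_ne_zero]
    linarith [abs_sub (log ε) (log 2), abs_of_pos (log_pos one_lt_two), log_two_lt_d9]
  nlinarith [le_max_right c 1]

lemma elogPlus_sepEntropy_le [PseudoMetricSpace X] [CompactSpace X] (f : X → X) {ε : ℝ}
    (hε : 0 < ε) {a : ℝ} (ha : 1 ≤ a) (hlog : log (Scard (dist : X → X → ℝ) (ε / 2)) ≤ a) :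
    elogPlus (sepEntropy dist f ε) ≤ log a :=
  elogPlus_le_log (sepEntropy_nonneg _ f ε)
    ((sepEntropy_le_log_of_scard_le_pow (scard_bowen_le_pow f hε)).trans
      (EReal.coe_le_coe_iff.mpr hlog)) ha

theorem dynMetricOrder_eq_zero_of_finite_boxDim_general [MetricSpace X] [CompactSpace X]
    (f : X → X)
    (hfin : Filter.limsup
        (fun ε : ℝ => ((Real.log (Scard (dist : X → X → ℝ) ε) / |Real.log ε| : ℝ) : EReal))
        (nhdsWithin 0 (Set.Ioi 0)) < ⊤) :
    Filter.limsup
        (fun ε : ℝ =>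
          elogPlus (Filter.limsup
              (fun n : ℕ =>
                (((n : ℝ)⁻¹ * Real.log (Scard (bowen (dist : X → X → ℝ) f n) ε) : ℝ) : EReal))
              atTop)
            / ((|Real.log ε| : ℝ) : EReal))
        (nhdsWithin 0 (Set.Ioi 0)) = 0 := by
  obtain ⟨K, hK, hbox⟩ := exists_eventually_le_mul_abs_log_half hfin
  change limsup (fun ε => elogPlus (sepEntropy dist f ε) / ((|log ε| : ℝ) : EReal)) _ = 0
  refine EReal.limsup_eq_zero_of_nonneg_of_le
    (fun ε => EReal.div_nonneg (elogPlus_nonneg _) (EReal.coe_nonneg.mpr (abs_nonneg _))) ?_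
    ((tendsto_log_const_mul_div_atTop (by linarith)).comp tendsto_abs_log_nhdsGT_zero)
  filter_upwards [hbox, self_mem_nhdsWithin,
    tendsto_abs_log_nhdsGT_zero.eventually_ge_atTop 1] with ε hlog (hε : 0 < ε) hε1
  rw [Function.comp_apply, EReal.coe_div]
  exact EReal.div_le_div_right_of_nonneg (EReal.coe_nonneg.mpr (abs_nonneg _))
    (elogPlus_sepEntropy_le f hε (by nlinarith) hlog)

/-- If `(X,d)` is compact with finite upper box-counting dimension, then the upper
dynamical metric order of any continuous map `f : X → X` vanishes. -/
theorem dynMetricOrder_eq_zero_of_finite_boxDim [MetricSpace X] [CompactSpace X]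
    (f : X → X) (hf : Continuous f)
    (hfin : Filter.limsup
        (fun ε : ℝ => ((Real.log (Scard (dist : X → X → ℝ) ε) / |Real.log ε| : ℝ) : EReal))
        (nhdsWithin 0 (Set.Ioi 0)) < ⊤) :
    Filter.limsup
        (fun ε : ℝ =>
          elogPlus (Filter.limsup
              (fun n : ℕ =>
                (((n : ℝ)⁻¹ * Real.log (Scard (bowen (dist : X → X → ℝ) f n) ε) : ℝ) : EReal))
              atTop)
            / ((|Real.log ε| : ℝ) : EReal))
        (nhdsWithin 0 (Set.Ioi 0)) = 0 :=
  dynMetricOrder_eq_zero_of_finite_boxDim_general f hfin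
end
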